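/- arXiv:1101.0267 — 5 statements merged into one kernel-verified Lean document; each statement's English description precedes it below -/
import Mathlib

section
/- Let A be a Poisson algebra over a field K of characteristic zero, with commutative associative product xy and Poisson bracket {x,y}. Define the single operation x*y := xy + {x,y}. Then for all x, y, z in A: (x*y)*z = x*(y*z) + (1/3)·( x*(z*y) − z*(x*y) − y*(x*z) + y*(z*x) ). -/
/-- In a Poisson algebra over a field of characteristic zero, the
operation `x*y := xy + {x,y}` satisfies
`(x*y)*z = x*(y*z) + (1/3)(x*(z*y) − z*(x*y) − y*(x*z) + y*(z*x))`. -/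
theorem poisson_single_operation
    {K A : Type*} [Field K] [CharZero K] [AddCommGroup A] [Module K A]
    (mul br : A →ₗ[K] A →ₗ[K] A)
    (mul_comm : ∀ x y : A, mul x y = mul y x)
    (mul_assoc : ∀ x y z : A, mul (mul x y) z = mul x (mul y z))
    (br_antisym : ∀ x y : A, br x y = -br y x)
    (br_jacobi : ∀ x y z : A, br (br x y) z = br x (br y z) + br (br x z) y)
    (br_derivation : ∀ x y z : A, br (mul x y) z = mul x (br y z) + mul (br x z) y) :
    ∀ x y z : A,
      mul (mul x y + br x y) z + br (mul x y + br x y) z =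
        (mul x (mul y z + br y z) + br x (mul y z + br y z)) +
        ((3 : K)⁻¹ • ((mul x (mul z y + br z y) + br x (mul z y + br z y))
          - (mul z (mul x y + br x y) + br z (mul x y + br x y))
          - (mul y (mul x z + br x z) + br y (mul x z + br x z))
          + (mul y (mul z x + br z x) + br y (mul z x + br z x)))) := by
  intro x y z
  -- bracket acting on a product, rewritten with the first argument outside
  have hbm : ∀ a b c : A, br a (mul b c) = mul b (br a c) + mul c (br a b) := by
    intro a b c
    rw [br_antisym a (mul b c), br_derivation b c a, br_antisym c a, br_antisym b a,
      map_neg, mul_comm (-(br a b)) c, map_neg]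
    abel
  -- triple products
  have e1 : mul (mul x y) z = mul x (mul y z) := mul_assoc x y z
  have e2 : mul x (mul z y) = mul x (mul y z) := by rw [mul_comm z y]
  have e3 : mul z (mul x y) = mul x (mul y z) := by rw [mul_comm z (mul x y), mul_assoc]
  have e4 : mul y (mul x z) = mul x (mul y z) := by
    rw [mul_comm y (mul x z), mul_assoc, mul_comm z y]
  have e5 : mul y (mul z x) = mul x (mul y z) := by
    rw [mul_comm y (mul z x), mul_assoc, e3]
  -- orientation of brackets
  have hzy : br z y = -(br y z) := br_antisym z y
  have hzx : br z x = -(br x z) := br_antisym z x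
  have hyx : br y x = -(br x y) := br_antisym y x
  -- outer bracket flips
  have hA : br (mul x y) z = -(br z (mul x y)) := br_antisym _ _
  have hBB : br (br x y) z = -(br z (br x y)) := br_antisym _ _
  have hMC : mul (br x y) z = mul z (br x y) := mul_comm _ _
  -- the dependent double bracket, via Jacobi
  have hJ2 : br y (br x z) = br x (br y z) + br z (br x y) := by
    have h := br_jacobi x y z
    rw [br_antisym (br x y) z, br_antisym (br x z) y] at h
    rw [← neg_neg (br z (br x y)), h]
    abel
  simp only [map_add, LinearMap.add_apply, e1, e2, e3, e4, e5, hA, hBB, hMC, hbm,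
    hzy, hzx, hyx, hJ2, map_neg]
  module
end

section
/- Let A be a PostLie algebra over a commutative ring K, with Lie bracket [,] and binary operation ∘. Then the operation {x,y} := x∘y − y∘x + [x,y] is antisymmetric and satisfies the Jacobi identity {{x,y},z} + {{y,z},x} + {{z,x},y} = 0 for all x, y, z in A. -/
/-- In a PostLie algebra, `{x,y} := x∘y − y∘x + [x,y]` is antisymmetric
and satisfies the Jacobi identity. -/
theorem postLie_lie
    {K A : Type*} [CommRing K] [AddCommGroup A] [Module K A]
    (br c : A →ₗ[K] A →ₗ[K] A)
    (br_antisym : ∀ x y : A, br x y = -br y x)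
    (br_jacobi : ∀ x y z : A, br x (br y z) + br y (br z x) + br z (br x y) = 0)
    (postLie1 : ∀ x y z : A,
      c (c x y) z - c x (c y z) - c (c x z) y + c x (c z y) = c x (br y z))
    (postLie2 : ∀ x y z : A, c (br x y) z = br (c x z) y + br x (c y z)) :
    (∀ x y : A, c x y - c y x + br x y = -(c y x - c x y + br y x)) ∧
    (∀ x y z : A,
      (c (c x y - c y x + br x y) z - c z (c x y - c y x + br x y) +
          br (c x y - c y x + br x y) z) +
      (c (c y z - c z y + br y z) x - c x (c y z - c z y + br y z) +
          br (c y z - c z y + br y z) x) +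
      (c (c z x - c x z + br z x) y - c y (c z x - c x z + br z x) +
          br (c z x - c x z + br z x) y) = 0) := by
  constructor
  · intro x y
    rw [br_antisym x y]
    abel
  · intro x y z
    simp only [map_sub, map_add, LinearMap.sub_apply, LinearMap.add_apply]
    have h1 := postLie1 x y z
    have h2 := postLie1 y z x
    have h3 := postLie1 z x y
    have h4 := postLie2 x y z
    have h5 := postLie2 y z x
    have h6 := postLie2 z x y
    have h7 := br_jacobi x y z
    have h8 := br_antisym (c x y) z
    have h9 := br_antisym (c y z) x
    have h10 := br_antisym (c z x) y
    have h11 := br_antisym (br x y) z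
    have h12 := br_antisym (br y z) x
    have h13 := br_antisym (br z x) y
    linear_combination (norm := module) h1 + h2 + h3 + h4 + h5 + h6 - h7 + h8 + h9 + h10 + h11 + h12 + h13
end

section
/- Let A be an L-dendriform algebra over a commutative ring K, with operations ▷ and ◁, and set x•y := x▷y + x◁y. Then • satisfies the left pre-Lie identity (x•y)•z − x•(y•z) = (y•x)•z − y•(x•z) for all x, y, z in A. -/
/-- In an L-dendriform algebra, `x•y := x▷y + x◁y` is left pre-Lie. -/
theorem ldendriform_preLie
    {K A : Type*} [CommRing K] [AddCommGroup A] [Module K A]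
    (t l : A →ₗ[K] A →ₗ[K] A)
    (h1 : ∀ x y z : A,
      t x (t y z) - t (t x y + l x y) z = t y (t x z) - t (t y x + l y x) z)
    (h2 : ∀ x y z : A,
      t x (l y z) - l (t x y) z = l y (t x z + l x z) - l (l y x) z) :
    ∀ x y z : A,
      (t (t x y + l x y) z + l (t x y + l x y) z) -
          (t x (t y z + l y z) + l x (t y z + l y z)) =
        (t (t y x + l y x) z + l (t y x + l y x) z) -
          (t y (t x z + l x z) + l y (t x z + l x z)) := by
  intro x y z
  have H1 := h1 x y z
  have H2 := h2 x y z
  have H3 := h2 y x z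
  simp only [map_add, LinearMap.add_apply] at *
  linear_combination (norm := abel) -H1 - H2 + H3
end

section
/- Let A be a quadri-algebra over a commutative ring K with operations ↖, ↗, ↘, ↙. Define x≺y := x↖y + x↙y, x≻y := x↗y + x↘y, x∧y := x↗y + x↖y, x∨y := x↘y + x↙y, and x⋆y the sum of all four operations. Then both (A, ≺, ≻) (horizontal structure) and (A, ∧, ∨) (vertical structure) are dendriform algebras, and ⋆ is associative. -/
set_option maxHeartbeats 1000000 in
/-- In a quadri-algebra with operations ↖ (nw), ↗ (ne), ↘ (se), ↙ (sw),
the horizontal operations `x≺y := x↖y + x↙y`, `x≻y := x↗y + x↘y` and the vertical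
operations `x∧y := x↗y + x↖y`, `x∨y := x↘y + x↙y` each form a dendriform algebra,
and `x⋆y := x↖y + x↗y + x↘y + x↙y` is associative. -/
theorem quadri_dendriform_structures
    {K A : Type*} [CommRing K] [AddCommGroup A] [Module K A]
    (nw ne se sw : A →ₗ[K] A →ₗ[K] A)
    (q1 : ∀ x y z : A, nw (nw x y) z = nw x (nw y z + ne y z + se y z + sw y z))
    (q2 : ∀ x y z : A, nw (ne x y) z = ne x (nw y z + sw y z))
    (q3 : ∀ x y z : A, ne (ne x y + nw x y) z = ne x (ne y z + se y z))
    (q4 : ∀ x y z : A, nw (sw x y) z = sw x (ne y z + nw y z))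
    (q5 : ∀ x y z : A, nw (se x y) z = se x (nw y z))
    (q6 : ∀ x y z : A, ne (se x y + sw x y) z = se x (ne y z))
    (q7 : ∀ x y z : A, sw (nw x y + sw x y) z = sw x (se y z + sw y z))
    (q8 : ∀ x y z : A, sw (ne x y + se x y) z = se x (sw y z))
    (q9 : ∀ x y z : A, se (nw x y + ne x y + se x y + sw x y) z = se x (se y z)) :
    -- horizontal dendriform structure (≺, ≻)
    ((∀ x y z : A,
        nw (nw x y + sw x y) z + sw (nw x y + sw x y) z =
          (nw x (nw y z + sw y z) + sw x (nw y z + sw y z)) +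
          (nw x (ne y z + se y z) + sw x (ne y z + se y z))) ∧
     (∀ x y z : A,
        nw (ne x y + se x y) z + sw (ne x y + se x y) z =
          ne x (nw y z + sw y z) + se x (nw y z + sw y z)) ∧
     (∀ x y z : A,
        (ne (nw x y + sw x y) z + se (nw x y + sw x y) z) +
          (ne (ne x y + se x y) z + se (ne x y + se x y) z) =
          ne x (ne y z + se y z) + se x (ne y z + se y z))) ∧
    -- vertical dendriform structure (∧, ∨)
    ((∀ x y z : A,
        ne (ne x y + nw x y) z + nw (ne x y + nw x y) z =
          (ne x (ne y z + nw y z) + nw x (ne y z + nw y z)) +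
          (ne x (se y z + sw y z) + nw x (se y z + sw y z))) ∧
     (∀ x y z : A,
        ne (se x y + sw x y) z + nw (se x y + sw x y) z =
          se x (ne y z + nw y z) + sw x (ne y z + nw y z)) ∧
     (∀ x y z : A,
        (se (ne x y + nw x y) z + sw (ne x y + nw x y) z) +
          (se (se x y + sw x y) z + sw (se x y + sw x y) z) =
          se x (se y z + sw y z) + sw x (se y z + sw y z))) ∧
    -- ⋆ is associative
    (∀ x y z : A,
      nw (nw x y + ne x y + se x y + sw x y) z +
        ne (nw x y + ne x y + se x y + sw x y) z +
        se (nw x y + ne x y + se x y + sw x y) z +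
        sw (nw x y + ne x y + se x y + sw x y) z =
      nw x (nw y z + ne y z + se y z + sw y z) +
        ne x (nw y z + ne y z + se y z + sw y z) +
        se x (nw y z + ne y z + se y z + sw y z) +
        sw x (nw y z + ne y z + se y z + sw y z)) := by


  refine ⟨⟨?_, ?_, ?_⟩, ⟨?_, ?_, ?_⟩, ?_⟩ <;> intro x y z
  · have h1 := q1 x y z; have h2 := q4 x y z; have h3 := q7 x y z
    simp only [map_add, LinearMap.add_apply] at h1 h2 h3 ⊢
    linear_combination (norm := abel) h1 + h2 + h3
  · have h1 := q2 x y z; have h2 := q5 x y z; have h3 := q8 x y z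
    simp only [map_add, LinearMap.add_apply] at h1 h2 h3 ⊢
    linear_combination (norm := abel) h1 + h2 + h3
  · have h1 := q3 x y z; have h2 := q6 x y z; have h3 := q9 x y z
    simp only [map_add, LinearMap.add_apply] at h1 h2 h3 ⊢
    linear_combination (norm := abel) h1 + h2 + h3
  · have h1 := q1 x y z; have h2 := q2 x y z; have h3 := q3 x y z
    simp only [map_add, LinearMap.add_apply] at h1 h2 h3 ⊢
    linear_combination (norm := abel) h1 + h2 + h3
  · have h1 := q4 x y z; have h2 := q5 x y z; have h3 := q6 x y z
    simp only [map_add, LinearMap.add_apply] at h1 h2 h3 ⊢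
    linear_combination (norm := abel) h1 + h2 + h3
  · have h1 := q7 x y z; have h2 := q8 x y z; have h3 := q9 x y z
    simp only [map_add, LinearMap.add_apply] at h1 h2 h3 ⊢
    linear_combination (norm := abel) h1 + h2 + h3
  · have h1 := q1 x y z; have h2 := q2 x y z; have h3 := q3 x y z
    have h4 := q4 x y z; have h5 := q5 x y z; have h6 := q6 x y z
    have h7 := q7 x y z; have h8 := q8 x y z; have h9 := q9 x y z
    simp only [map_add, LinearMap.add_apply] at h1 h2 h3 h4 h5 h6 h7 h8 h9 ⊢
    linear_combination (norm := abel) h1 + h2 + h3 + h4 + h5 + h6 + h7 + h8 + h9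
end

section
/- In ℚ[[X]], let F be the power series with coefficient of Xⁿ equal to the n-th Catalan number c_n for n ≥ 1 and constant coefficient 0 (the generating series of the dendriform operad), and let G = Σ_{n≥1} n·Xⁿ = X/(1−X)² (the generating series of the diassociative operad). Then the Koszul duality functional equation holds: G(−F(−X)) = X, where composition is substitution of formal power series with zero constant term. -/
open PowerSeries

/-- Composition (substitution) of formal power series over ℚ: `psComp f g = f(g)`.
For `g` with zero constant term this agrees with the usual substitution, since the
coefficient of `Xⁿ` in `f(g)` only involves `gᵏ` for `k ≤ n`. -/
noncomputable def psComp (f g : PowerSeries ℚ) : PowerSeries ℚ :=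
  PowerSeries.mk fun n =>
    PowerSeries.coeff (R := ℚ) n (∑ k ∈ Finset.range (n + 1), PowerSeries.coeff (R := ℚ) k f • g ^ k)

/-- The generating series of the dendriform operad: coefficient of Xⁿ is the
n-th Catalan number for n ≥ 1, constant coefficient 0. -/
noncomputable def dendSeries : PowerSeries ℚ :=
  PowerSeries.mk fun n => if n = 0 then 0 else (catalan n : ℚ)

/-- The generating series of the diassociative operad: `Σ_{n≥1} n·Xⁿ = X/(1−X)²`. -/
noncomputable def diasSeries : PowerSeries ℚ :=
  PowerSeries.mk fun n => (n : ℚ)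

/-!
Write `C = 1 + X C²` for the Catalan series, so `F = C - 1`. Then `H := -F(-X) = 1 - C(-X)`
satisfies `H = X (1 - H)²`, i.e. `H` is the compositional inverse of `X / (1 - X)² = G`:
substituting `H` into `G (1 - X)² = X` gives `G(H) (1 - H)² = H = X (1 - H)²`, and `(1 - H)²`
is a unit because `H` has zero constant term.
-/

theorem psComp_eq_subst (f : ℚ⟦X⟧) {g : ℚ⟦X⟧} (hg : constantCoeff g = 0) :
    psComp f g = f.subst g := by
  ext n
  simp only [psComp, coeff_mk, map_sum, coeff_smul,
    coeff_subst' (HasSubst.of_constantCoeff_zero' hg)]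
  refine (finsum_eq_sum_of_support_subset _ fun k hk => ?_).symm
  rw [Finset.coe_range, Set.mem_Iio, Nat.lt_succ_iff]
  by_contra! hnk
  refine hk ?_
  dsimp only
  rw [X_pow_dvd_iff.mp (pow_dvd_pow_of_dvd (X_dvd_iff.mpr hg) k) n hnk, smul_zero]

namespace PowerSeries

variable {R : Type*} [CommRing R]

theorem subst_eq_X_of_mul_one_sub_X_sq_eq_X {G H : R⟦X⟧} (hG : G * (1 - X) ^ 2 = X)
    (hH : H = X * (1 - H) ^ 2) : G.subst H = X := by
  have hH0 : constantCoeff H = 0 := by rw [hH, map_mul, constantCoeff_X, zero_mul]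
  have hsubst : HasSubst H := HasSubst.of_constantCoeff_zero' hH0
  have hunit : IsUnit ((1 - H) ^ 2) := by
    rw [isUnit_iff_constantCoeff, map_pow, map_sub, map_one, hH0, sub_zero, one_pow]
    exact isUnit_one
  refine hunit.mul_left_cancel ?_
  calc (1 - H) ^ 2 * G.subst H = (G * (1 - X) ^ 2).subst H := by
        rw [← coe_substAlgHom hsubst, map_mul, map_pow, map_sub, map_one, coe_substAlgHom,
          subst_X hsubst, mul_comm]
    _ = (1 - H) ^ 2 * X := by rw [hG, subst_X hsubst, mul_comm, ← hH]

theorem rescale_neg_one_map_catalanSeries :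
    rescale (-1 : R) (map (Nat.castRingHom R) catalanSeries) =
      1 - X * rescale (-1 : R) (map (Nat.castRingHom R) catalanSeries) ^ 2 := by
  conv_lhs => rw [← catalanSeries_sq_mul_X_add_one]
  simp only [map_add, map_mul, map_pow, map_X, map_one, rescale_neg_one_X]
  ring

end PowerSeries

theorem dendSeries_eq : dendSeries = map (Nat.castRingHom ℚ) catalanSeries - 1 := by
  ext n
  simp only [dendSeries, coeff_mk, map_sub, coeff_map, catalanSeries_coeff, coeff_one]
  split_ifs <;> simp_all

theorem diasSeries_mul_one_sub_X_sq : diasSeries * (1 - X) ^ 2 = X := by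
  have h : diasSeries = X * mk fun n => ((1 + n).choose 1 : ℚ) := by
    ext (_ | n)
    · simp [diasSeries]
    · simp [diasSeries, coeff_succ_X_mul, add_comm]
  rw [h, mul_assoc, mk_add_choose_mul_one_sub_pow_eq_one, mul_one]

theorem neg_dendSeries_subst_neg_X :
    -dendSeries.subst (-X : ℚ⟦X⟧) = X * (1 - -dendSeries.subst (-X : ℚ⟦X⟧)) ^ 2 := by
  rw [← neg_one_smul ℚ X, ← rescale_eq_subst, dendSeries_eq, map_sub, map_one]
  linear_combination -rescale_neg_one_map_catalanSeries (R := ℚ)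

/-- Koszul duality functional equation for the pair Dend/Dias:
`G(−F(−X)) = X`. -/
theorem dend_dias_koszul_duality :
    psComp diasSeries (-(psComp dendSeries (-PowerSeries.X))) = PowerSeries.X := by
  have hH := neg_dendSeries_subst_neg_X
  rw [psComp_eq_subst dendSeries (by simp),
    psComp_eq_subst diasSeries (by rw [hH, map_mul, constantCoeff_X, zero_mul])]
  exact subst_eq_X_of_mul_one_sub_X_sq_eq_X diasSeries_mul_one_sub_X_sq hH
end
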